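/- Lemma 1 of the paper (full correctness of DCDP with pruning): for any nonempty I₀ ⊆ {1,…,n} and any ℓ ∈ ℝ ∪ {−∞}, the procedure DCDP(I₀, ℓ) — which computes p_L maximizing J over S_L(I₀); returns (J₀ = −∞, ℓ₀ = ℓ) if ℓ > J(p_L) (Rule A); returns (p₀ = p_L, J₀ = J(p_L), ℓ₀ = max(ℓ, J₀)) if p_L ∈ S(I₀) (Rule B); and otherwise splits I₀ = I₁ ∪ I₂, computes (p₁, J₁, ℓ₁) = DCDP(I₁, ℓ), (p₂, J₂, ℓ₂) = DCDP(I₂, ℓ₁), and returns the better of p₁, p₂ with ℓ₀ = max(ℓ₂, J₀) (Rule C) — satisfies: if max_{S(I₀)} J ≥ ℓ then p₀ ∈ argmax_{S(I₀)} J and J₀ = ℓ₀ = J(p₀) ≥ ℓ; and if max_{S(I₀)} J < ℓ then J₀ < ℓ₀ = ℓ. -/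

import Mathlib

open Set

/-- Feasible region `S(I)`: tuples `p ∈ {1,…,n}^{m+1}` with last entry in `I`,
chain constraints `|p_i − p_{i+1}| ≤ ς`, and wrap constraint `|p_last − p_0| ≤ ς`. -/
def SReg (n m ς : ℕ) (I : Set ℤ) : Set (Fin (m+1) → ℤ) :=
  {p | (∀ i, 1 ≤ p i ∧ p i ≤ (n : ℤ)) ∧ p (Fin.last m) ∈ I ∧
       (∀ i : Fin m, |p i.castSucc - p i.succ| ≤ (ς : ℤ)) ∧
       |p (Fin.last m) - p 0| ≤ (ς : ℤ)}

/-- Relaxed region `S_L(I)`: the wrap constraint is dropped; instead the first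
entry must lie in `I + [−ς, ς]`. -/
def SLReg (n m ς : ℕ) (I : Set ℤ) : Set (Fin (m+1) → ℤ) :=
  {p | (∀ i, 1 ≤ p i ∧ p i ≤ (n : ℤ)) ∧ p (Fin.last m) ∈ I ∧
       (∃ j ∈ I, |p 0 - j| ≤ (ς : ℤ)) ∧
       (∀ i : Fin m, |p i.castSucc - p i.succ| ≤ (ς : ℤ))}

/-- The recursive specification of `DCDP` with pruning (Algorithm A of the
paper). `D I₀ ℓ = (p₀, J₀, ℓ₀)`.  On every nonempty finite `I₀ ⊆ {1,…,n}` and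
every `ℓ ∈ ℝ ∪ {−∞}` there is a maximizer `p_L` of `J` over `S_L(I₀)`, and:
Rule A: if `ℓ > J(p_L)` then `J₀ = −∞` and `ℓ₀ = ℓ`;
Rule B: if `ℓ ≤ J(p_L)` and `p_L ∈ S(I₀)` then `p₀ = p_L`, `J₀ = J(p_L)`,
`ℓ₀ = max(ℓ, J₀)`;
Rule C: otherwise `I₀` is split into disjoint nonempty `I₁ ∪ I₂ = I₀`, and with
`(p₁, J₁, ℓ₁) = D I₁ ℓ`, `(p₂, J₂, ℓ₂) = D I₂ ℓ₁`, the result is the better of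
`p₁, p₂`, with `J₀ = max(J₁, J₂)` and `ℓ₀ = max(ℓ₂, J₀)`. -/
def DCDPSpec (n m ς : ℕ) (J : (Fin (m+1) → ℤ) → ℝ)
    (D : Set ℤ → EReal → (Fin (m+1) → ℤ) × EReal × EReal) : Prop :=
  ∀ (I₀ : Set ℤ) (ℓ : EReal), I₀.Finite → I₀.Nonempty → I₀ ⊆ Set.Icc 1 (n : ℤ) →
    ∃ pL : Fin (m+1) → ℤ,
      pL ∈ SLReg n m ς I₀ ∧ (∀ q ∈ SLReg n m ς I₀, J q ≤ J pL) ∧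
      (((J pL : ℝ) : EReal) < ℓ ∧ (D I₀ ℓ).2.1 = ⊥ ∧ (D I₀ ℓ).2.2 = ℓ
       ∨
       ℓ ≤ ((J pL : ℝ) : EReal) ∧ pL ∈ SReg n m ς I₀ ∧
         (D I₀ ℓ).1 = pL ∧ (D I₀ ℓ).2.1 = ((J pL : ℝ) : EReal) ∧
         (D I₀ ℓ).2.2 = max ℓ ((J pL : ℝ) : EReal)
       ∨
       ℓ ≤ ((J pL : ℝ) : EReal) ∧ pL ∉ SReg n m ς I₀ ∧
         ∃ I₁ I₂ : Set ℤ, Disjoint I₁ I₂ ∧ I₁.Nonempty ∧ I₂.Nonempty ∧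
           I₁ ∪ I₂ = I₀ ∧
           (D I₀ ℓ).1 = (if (D I₂ (D I₁ ℓ).2.2).2.1 ≤ (D I₁ ℓ).2.1
                          then (D I₁ ℓ).1 else (D I₂ (D I₁ ℓ).2.2).1) ∧
           (D I₀ ℓ).2.1 = max (D I₁ ℓ).2.1 (D I₂ (D I₁ ℓ).2.2).2.1 ∧
           (D I₀ ℓ).2.2 = max (D I₂ (D I₁ ℓ).2.2).2.2 (D I₀ ℓ).2.1)

/-! Induction on `|I₀|`. Rule A is sound because `S(I) ⊆ S_L(I)`, so `ℓ` also exceeds the maximum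
of `J` over `S(I)`; Rule B because a maximizer over the relaxation that is feasible for `S(I)` is a
maximizer over `S(I)`. In Rule C, `S(I₀) = S(I₁) ∪ S(I₂)`, and the threshold `ℓ₁` passed to the
second call is `max ℓ (max_{S(I₁)} J)`: the second call either returns a point at least as good as
everything seen so far or certifies that `S(I₂)` contains none. -/

lemma sReg_subset_sLReg (n m ς : ℕ) (I : Set ℤ) : SReg n m ς I ⊆ SLReg n m ς I := by
  rintro p ⟨hbox, hlast, hchain, hwrap⟩
  exact ⟨hbox, hlast, ⟨p (Fin.last m), hlast, by rwa [abs_sub_comm]⟩, hchain⟩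

lemma sReg_union (n m ς : ℕ) (I₁ I₂ : Set ℤ) :
    SReg n m ς (I₁ ∪ I₂) = SReg n m ς I₁ ∪ SReg n m ς I₂ := by
  ext p
  simp only [SReg, mem_union, mem_ofPred_eq]
  tauto

lemma ncard_lt_ncard_of_union_eq {α : Type*} {s t u : Set α} (hst : Disjoint s t)
    (ht : t.Nonempty) (hu : u.Finite) (hstu : s ∪ t = u) : s.ncard < u.ncard := by
  obtain ⟨x, hx⟩ := ht
  subst hstu
  exact ncard_lt_ncard ⟨subset_union_left, fun h => disjoint_right.1 hst hx (h (Or.inr hx))⟩ hu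

section PrunedArgmax

variable {α : Type*} {S S₁ S₂ : Set α} {J : α → ℝ} {ℓ : EReal} {r r₁ r₂ : α × EReal × EReal}

/-- `r = (p₀, J₀, ℓ₀)` is a correct answer of DCDP with pruning threshold `ℓ` on candidates `S`. -/
def IsPrunedArgmax (S : Set α) (J : α → ℝ) (ℓ : EReal) (r : α × EReal × EReal) : Prop :=
  ((∃ q ∈ S, ℓ ≤ ((J q : ℝ) : EReal)) →
    r.1 ∈ S ∧ (∀ q ∈ S, J q ≤ J r.1) ∧ r.2.1 = ((J r.1 : ℝ) : EReal) ∧ r.2.2 = r.2.1 ∧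
      ℓ ≤ r.2.1) ∧
  ((∀ q ∈ S, ((J q : ℝ) : EReal) < ℓ) → r.2.1 < ℓ ∧ r.2.2 = ℓ)

lemma isPrunedArgmax_of_mem_of_forall_le {p : α} (hpS : p ∈ S) (hmax : ∀ q ∈ S, J q ≤ J p)
    (hℓ : ℓ ≤ J p) (h₁ : r.1 = p) (h₂ : r.2.1 = J p) (h₃ : r.2.2 = J p) :
    IsPrunedArgmax S J ℓ r := by
  subst h₁
  exact ⟨fun _ => ⟨hpS, hmax, h₂, h₃.trans h₂.symm, h₂ ▸ hℓ⟩,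
    fun hlt => absurd (hlt _ hpS) hℓ.not_gt⟩

lemma isPrunedArgmax_of_forall_lt (hS : ∀ q ∈ S, ((J q : ℝ) : EReal) < ℓ) (h₂ : r.2.1 < ℓ)
    (h₃ : r.2.2 = ℓ) : IsPrunedArgmax S J ℓ r :=
  ⟨fun ⟨q, hq, hℓq⟩ => absurd (hS q hq) hℓq.not_gt, fun _ => ⟨h₂, h₃⟩⟩

lemma IsPrunedArgmax.union_of_exists_left (H₁ : IsPrunedArgmax S₁ J ℓ r₁)
    (H₂ : IsPrunedArgmax S₂ J r₁.2.2 r₂) (h₁ : ∃ q ∈ S₁, ℓ ≤ ((J q : ℝ) : EReal))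
    (hp : r.1 = if r₂.2.1 ≤ r₁.2.1 then r₁.1 else r₂.1) (hJ : r.2.1 = max r₁.2.1 r₂.2.1)
    (hℓ : r.2.2 = max r₂.2.2 r.2.1) :
    IsPrunedArgmax (S₁ ∪ S₂) J ℓ r := by
  obtain ⟨hp₁S, hp₁max, hJ₁, hℓ₁, hℓJ₁⟩ := H₁.1 h₁
  rw [hℓ₁, hJ₁] at H₂
  rw [hJ₁] at hℓJ₁ hp hJ
  by_cases h₂ : ∃ q ∈ S₂, ((J r₁.1 : ℝ) : EReal) ≤ J q
  · obtain ⟨hp₂S, hp₂max, hJ₂, hℓ₂, hℓJ₂⟩ := H₂.1 h₂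
    rw [hJ₂] at hℓJ₂ hp hJ
    rw [max_eq_right hℓJ₂] at hJ
    have hwin : r.1 ∈ S₁ ∪ S₂ ∧ J r.1 = J r₂.1 := by
      split_ifs at hp with hle
      · rw [hp]; exact ⟨mem_union_left _ hp₁S, by exact_mod_cast le_antisymm hℓJ₂ hle⟩
      · rw [hp]; exact ⟨mem_union_right _ hp₂S, rfl⟩
    have hle : J r₁.1 ≤ J r₂.1 := by exact_mod_cast hℓJ₂
    refine isPrunedArgmax_of_mem_of_forall_le hwin.1 ?_ ?_ rfl (by rw [hJ, hwin.2])
      (by rw [hℓ, hJ, hℓ₂, hJ₂, max_self, hwin.2])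
    · rintro q (hq | hq)
      · exact hwin.2 ▸ (hp₁max q hq).trans hle
      · exact hwin.2 ▸ hp₂max q hq
    · exact hwin.2 ▸ hℓJ₁.trans hℓJ₂
  · push Not at h₂
    obtain ⟨hJ₂, hℓ₂⟩ := H₂.2 h₂
    rw [if_pos hJ₂.le] at hp
    rw [max_eq_left hJ₂.le] at hJ
    refine isPrunedArgmax_of_mem_of_forall_le (mem_union_left _ hp₁S) ?_ hℓJ₁ hp hJ
      (by rw [hℓ, hJ, hℓ₂, max_self])
    rintro q (hq | hq)
    · exact hp₁max q hq
    · exact_mod_cast (h₂ q hq).le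

lemma IsPrunedArgmax.union_of_forall_lt_left (H₁ : IsPrunedArgmax S₁ J ℓ r₁)
    (H₂ : IsPrunedArgmax S₂ J r₁.2.2 r₂) (h₁ : ∀ q ∈ S₁, ((J q : ℝ) : EReal) < ℓ)
    (hp : r.1 = if r₂.2.1 ≤ r₁.2.1 then r₁.1 else r₂.1) (hJ : r.2.1 = max r₁.2.1 r₂.2.1)
    (hℓ : r.2.2 = max r₂.2.2 r.2.1) :
    IsPrunedArgmax (S₁ ∪ S₂) J ℓ r := by
  obtain ⟨hJ₁, hℓ₁⟩ := H₁.2 h₁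
  rw [hℓ₁] at H₂
  by_cases h₂ : ∃ q ∈ S₂, ℓ ≤ ((J q : ℝ) : EReal)
  · obtain ⟨hp₂S, hp₂max, hJ₂, hℓ₂, hℓJ₂⟩ := H₂.1 h₂
    have hwin : r₁.2.1 < r₂.2.1 := hJ₁.trans_le hℓJ₂
    rw [if_neg hwin.not_ge] at hp
    rw [max_eq_right hwin.le, hJ₂] at hJ
    refine isPrunedArgmax_of_mem_of_forall_le (mem_union_right _ hp₂S) ?_ (hJ₂ ▸ hℓJ₂) hp hJ
      (by rw [hℓ, hJ, hℓ₂, hJ₂, max_self])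
    rintro q (hq | hq)
    · exact_mod_cast ((h₁ q hq).trans_le (hJ₂ ▸ hℓJ₂)).le
    · exact hp₂max q hq
  · push Not at h₂
    obtain ⟨hJ₂, hℓ₂⟩ := H₂.2 h₂
    have hJ₀ : r.2.1 < ℓ := hJ ▸ max_lt hJ₁ hJ₂
    refine isPrunedArgmax_of_forall_lt ?_ hJ₀ (by rw [hℓ, hℓ₂, max_eq_left hJ₀.le])
    rintro q (hq | hq)
    exacts [h₁ q hq, h₂ q hq]

lemma IsPrunedArgmax.union (H₁ : IsPrunedArgmax S₁ J ℓ r₁) (H₂ : IsPrunedArgmax S₂ J r₁.2.2 r₂)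
    (hp : r.1 = if r₂.2.1 ≤ r₁.2.1 then r₁.1 else r₂.1) (hJ : r.2.1 = max r₁.2.1 r₂.2.1)
    (hℓ : r.2.2 = max r₂.2.2 r.2.1) :
    IsPrunedArgmax (S₁ ∪ S₂) J ℓ r := by
  by_cases h₁ : ∃ q ∈ S₁, ℓ ≤ ((J q : ℝ) : EReal)
  · exact H₁.union_of_exists_left H₂ h₁ hp hJ hℓ
  · push Not at h₁
    exact H₁.union_of_forall_lt_left H₂ h₁ hp hJ hℓ

end PrunedArgmax

theorem DCDPSpec.isPrunedArgmax {n m ς : ℕ} {J : (Fin (m+1) → ℤ) → ℝ}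
    {D : Set ℤ → EReal → (Fin (m+1) → ℤ) × EReal × EReal} (hD : DCDPSpec n m ς J D)
    {I₀ : Set ℤ} (hfin : I₀.Finite) (hne : I₀.Nonempty) (hsub : I₀ ⊆ Icc 1 (n : ℤ))
    (ℓ : EReal) : IsPrunedArgmax (SReg n m ς I₀) J ℓ (D I₀ ℓ) := by
  induction hk : I₀.ncard using Nat.strong_induction_on generalizing I₀ ℓ with
  | _ k ih =>
  obtain ⟨pL, -, hpLmax, hrule⟩ := hD I₀ ℓ hfin hne hsub
  have hpLmax' : ∀ q ∈ SReg n m ς I₀, J q ≤ J pL :=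
    fun q hq => hpLmax q (sReg_subset_sLReg n m ς I₀ hq)
  rcases hrule with ⟨hlt, hJ₀, hℓ₀⟩ | ⟨hle, hpLS, hp₀, hJ₀, hℓ₀⟩ |
      ⟨-, -, I₁, I₂, hdisj, hne₁, hne₂, hunion, hp₀, hJ₀, hℓ₀⟩
  · refine isPrunedArgmax_of_forall_lt (fun q hq => ?_)
      (hJ₀ ▸ (EReal.bot_lt_coe _).trans hlt) hℓ₀
    exact (EReal.coe_le_coe_iff.2 (hpLmax' q hq)).trans_lt hlt
  · exact isPrunedArgmax_of_mem_of_forall_le hpLS hpLmax' hle hp₀ hJ₀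
      (hℓ₀.trans (max_eq_right hle))
  · have hI₁ : I₁ ⊆ I₀ := hunion ▸ subset_union_left
    have hI₂ : I₂ ⊆ I₀ := hunion ▸ subset_union_right
    have H₁ := ih _ (hk ▸ ncard_lt_ncard_of_union_eq hdisj hne₂ hfin hunion)
      (hfin.subset hI₁) hne₁ (hI₁.trans hsub) ℓ rfl
    have H₂ := ih _
      (hk ▸ ncard_lt_ncard_of_union_eq hdisj.symm hne₁ hfin (union_comm _ _ ▸ hunion))
      (hfin.subset hI₂) hne₂ (hI₂.trans hsub) (D I₁ ℓ).2.2 rfl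
    simpa only [← sReg_union, hunion] using H₁.union H₂ hp₀ hJ₀ hℓ₀

theorem dcdp_lemma1_general (n m ς : ℕ) (J : (Fin (m+1) → ℤ) → ℝ)
    (D : Set ℤ → EReal → (Fin (m+1) → ℤ) × EReal × EReal)
    (hD : DCDPSpec n m ς J D) :
    ∀ (I₀ : Set ℤ) (ℓ : EReal), I₀.Finite → I₀.Nonempty →
      I₀ ⊆ Set.Icc 1 (n : ℤ) →
      ((∃ q ∈ SReg n m ς I₀, ℓ ≤ ((J q : ℝ) : EReal)) →
        (D I₀ ℓ).1 ∈ SReg n m ς I₀ ∧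
        (∀ q ∈ SReg n m ς I₀, J q ≤ J (D I₀ ℓ).1) ∧
        (D I₀ ℓ).2.1 = ((J (D I₀ ℓ).1 : ℝ) : EReal) ∧
        (D I₀ ℓ).2.2 = (D I₀ ℓ).2.1 ∧
        ℓ ≤ (D I₀ ℓ).2.1) ∧
      ((∀ q ∈ SReg n m ς I₀, ((J q : ℝ) : EReal) < ℓ) →
        (D I₀ ℓ).2.1 < ℓ ∧ (D I₀ ℓ).2.2 = ℓ) :=
  fun _ ℓ hfin hne hsub => hD.isPrunedArgmax hfin hne hsub ℓ

/-- Lemma 1 of the paper, full correctness of DCDP with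
pruning: for every procedure `D` satisfying the recursive specification,
every nonempty finite `I₀ ⊆ {1,…,n}` and every `ℓ ∈ ℝ ∪ {−∞}`:
Case G: if `max_{S(I₀)} J ≥ ℓ` then `p₀` maximizes `J` over `S(I₀)` and
`J₀ = ℓ₀ = J(p₀) ≥ ℓ`;
Case L: if `max_{S(I₀)} J < ℓ` then `J₀ < ℓ₀ = ℓ`. -/
theorem dcdp_lemma1 (n m ς : ℕ) (hn : 1 ≤ n) (hς : 1 ≤ ς)
    (L : Fin (m+1) → ℤ → ℝ) (J : (Fin (m+1) → ℤ) → ℝ)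
    (hJ : J = fun p => ∑ i, L i (p i))
    (D : Set ℤ → EReal → (Fin (m+1) → ℤ) × EReal × EReal)
    (hD : DCDPSpec n m ς J D) :
    ∀ (I₀ : Set ℤ) (ℓ : EReal), I₀.Finite → I₀.Nonempty →
      I₀ ⊆ Set.Icc 1 (n : ℤ) →
      ((∃ q ∈ SReg n m ς I₀, ℓ ≤ ((J q : ℝ) : EReal)) →
        (D I₀ ℓ).1 ∈ SReg n m ς I₀ ∧
        (∀ q ∈ SReg n m ς I₀, J q ≤ J (D I₀ ℓ).1) ∧
        (D I₀ ℓ).2.1 = ((J (D I₀ ℓ).1 : ℝ) : EReal) ∧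
        (D I₀ ℓ).2.2 = (D I₀ ℓ).2.1 ∧
        ℓ ≤ (D I₀ ℓ).2.1) ∧
      ((∀ q ∈ SReg n m ς I₀, ((J q : ℝ) : EReal) < ℓ) →
        (D I₀ ℓ).2.1 < ℓ ∧ (D I₀ ℓ).2.2 = ℓ) :=
  dcdp_lemma1_general n m ς J D hD
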